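/- Let P be a continuous probability transition kernel on a finite nonempty alphabet G and let φ_P be its update rule. Then for every u ∈ [0,1), the map w ↦ φ_P(u, w) is continuous from G^{-ℕ+} to the discrete space G, i.e., it is locally constant: for every history w there exists k ∈ ℕ such that φ_P(u, z) = φ_P(u, w) for every history z whose last k symbols agree with those of w. -/

import Mathlib

open Finset Filter

variable {G : Type*}

/-- The ball of all histories admitting `s` as a suffix.
A history is `w : ℕ → G`, index `i` encoding the symbol `w_{-(i+1)}` (index 0 = most recent).
A word `s : List G` encodes `(s_{-n},…,s_{-1})` with list index `i` = symbol `s_{-(i+1)}`. -/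
def tree (s : List G) : Set (ℕ → G) := {w | ∀ i : Fin s.length, w i = s.get i}

/-- The word `w_{-k:-1}` formed by the last `k` symbols of the history `w`. -/
def word (w : ℕ → G) (k : ℕ) : List G := List.ofFn fun i : Fin k => w i

/-- A probability transition kernel on `G`. -/
def IsKernel [Fintype G] (P : (ℕ → G) → G → ℝ) : Prop :=
  ∀ w, (∀ g, 0 ≤ P w g) ∧ ∑ g, P w g = 1

/-- Total variation distance between distributions on a finite alphabet. -/
noncomputable def tvDist [Fintype G] (p q : G → ℝ) : ℝ := (1 / 2) * ∑ a, |p a - q a|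

/-- Oscillation `η_P(s)` of the kernel `P` on the ball `tree s`. -/
noncomputable def eta [Fintype G] (P : (ℕ → G) → G → ℝ) (s : List G) : ℝ :=
  ⨆ w : tree s, ⨆ z : tree s, tvDist (P w) (P z)

/-- Coupling coefficient `a_{|s|}(g|s)`. -/
noncomputable def aCoef (P : (ℕ → G) → G → ℝ) (g : G) (s : List G) : ℝ :=
  ⨅ w : tree s, P w g

/-- Coupling coefficient `A_{|s|}(s)`. -/
noncomputable def ACoef [Fintype G] (P : (ℕ → G) → G → ℝ) (s : List G) : ℝ :=
  ∑ g, aCoef P g s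

/-- `A_k^- = inf { A_k(s) : |s| = k }`. -/
noncomputable def Aminus [Fintype G] (P : (ℕ → G) → G → ℝ) (k : ℕ) : ℝ :=
  ⨅ s : {s : List G // s.length = k}, ACoef P s.1

/-- Continuity of the kernel: continuity from the product topology (G discrete) to
the total variation distance. -/
def KernelContinuous [Fintype G] (P : (ℕ → G) → G → ℝ) : Prop :=
  ∀ w : ℕ → G, ∀ ε > 0, ∃ k : ℕ, ∀ z : ℕ → G, (∀ i < k, z i = w i) → tvDist (P w) (P z) < ε

/-- `α_k(g | w_{-k:-1})` with the convention `A_{-1}(ε) = a_{-1}(·|ε) = 0`. -/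
noncomputable def alphaCoef [Fintype G] [LinearOrder G] (P : (ℕ → G) → G → ℝ)
    (k : ℕ) (g : G) (w : ℕ → G) : ℝ :=
  (if k = 0 then 0 else ACoef P (word w (k - 1))) +
    ∑ h ∈ univ.filter (fun h => h < g),
      (aCoef P h (word w k) - if k = 0 then 0 else aCoef P h (word w (k - 1)))

/-- `β_k(g | w_{-k:-1})` with the convention `A_{-1}(ε) = a_{-1}(·|ε) = 0`. -/
noncomputable def betaCoef [Fintype G] [LinearOrder G] (P : (ℕ → G) → G → ℝ)
    (k : ℕ) (g : G) (w : ℕ → G) : ℝ :=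
  (if k = 0 then 0 else ACoef P (word w (k - 1))) +
    ∑ h ∈ univ.filter (fun h => h ≤ g),
      (aCoef P h (word w k) - if k = 0 then 0 else aCoef P h (word w (k - 1)))

/-- `φ` is the update rule of `P`: for every `u ∈ [0,1)` and history `w`, `φ u w` is the
(unique) symbol `g` such that `α_k(g|w_{-k:-1}) ≤ u < β_k(g|w_{-k:-1})` for some `k`. -/
def IsUpdateRule [Fintype G] [LinearOrder G] (P : (ℕ → G) → G → ℝ)
    (φ : ℝ → (ℕ → G) → G) : Prop :=
  ∀ u ∈ Set.Ico (0 : ℝ) 1, ∀ w : ℕ → G, ∃ k : ℕ,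
    alphaCoef P k (φ u w) w ≤ u ∧ u < betaCoef P k (φ u w) w

/-!
The intervals `[α_k(g|w), β_k(g|w))` are built from nonnegative increments of the coupling
coefficients and are laid out left to right in lexicographic order of `(k, g)`, so they are
pairwise disjoint and `φ_P(u, w)` is the unique `g` whose interval contains `u`. The interval at
level `k` depends only on `w_{-k:-1}`, so every `z` agreeing with `w` there has `u` in the same
interval for the same symbol, hence `φ_P(u, z) = φ_P(u, w)`.
-/

section Tree

lemma mem_tree_word {z w : ℕ → G} {k : ℕ} : z ∈ tree (word w k) ↔ ∀ i < k, z i = w i := by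
  constructor
  · intro h i hi
    simpa [word, List.get_ofFn] using h ⟨i, by simpa [word] using hi⟩
  · intro h i
    have hi : (i : ℕ) < k := by simpa [word] using i.isLt
    exact (h i hi).trans (List.get_ofFn (fun j : Fin k => w j) i).symm

lemma self_mem_tree_word (w : ℕ → G) (k : ℕ) : w ∈ tree (word w k) :=
  mem_tree_word.2 fun _ _ => rfl

lemma tree_word_subset {w : ℕ → G} {j k : ℕ} (hjk : j ≤ k) :
    tree (word w k) ⊆ tree (word w j) := fun _ hz =>
  mem_tree_word.2 fun i hi => mem_tree_word.1 hz i (hi.trans_le hjk)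

lemma word_eq_of_agree {z w : ℕ → G} {j k : ℕ} (hjk : j ≤ k) (h : ∀ i < k, z i = w i) :
    word z j = word w j := by
  unfold word
  congr 1
  funext i
  exact h i (i.isLt.trans_le hjk)

end Tree

section Coef

variable {P : (ℕ → G) → G → ℝ}

lemma aCoef_nonneg (hP : ∀ w g, 0 ≤ P w g) (g : G) (s : List G) : 0 ≤ aCoef P g s :=
  Real.iInf_nonneg fun w => hP w g

lemma aCoef_anti (hP : ∀ w g, 0 ≤ P w g) {s t : List G} (hs : (tree s).Nonempty)
    (hst : tree s ⊆ tree t) (g : G) : aCoef P g t ≤ aCoef P g s := by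
  have : Nonempty (tree s) := hs.to_subtype
  have hbdd : BddBelow (Set.range fun w : tree t => P w g) :=
    ⟨0, by rintro _ ⟨w, rfl⟩; exact hP w g⟩
  exact le_ciInf fun w => ciInf_le hbdd ⟨w.1, hst w.2⟩

lemma aCoef_word_mono (hP : ∀ w g, 0 ≤ P w g) (w : ℕ → G) (g : G) {j k : ℕ} (hjk : j ≤ k) :
    aCoef P g (word w j) ≤ aCoef P g (word w k) :=
  aCoef_anti hP ⟨w, self_mem_tree_word w k⟩ (tree_word_subset hjk) g

lemma aCoef_word_sub_prev_nonneg (hP : ∀ w g, 0 ≤ P w g) (w : ℕ → G) (k : ℕ) (h : G) :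
    0 ≤ aCoef P h (word w k) - if k = 0 then 0 else aCoef P h (word w (k - 1)) := by
  split_ifs
  · simpa using aCoef_nonneg hP h (word w k)
  · exact sub_nonneg.2 (aCoef_word_mono hP w h (Nat.sub_le k 1))

variable [Fintype G]

lemma ACoef_word_mono (hP : ∀ w g, 0 ≤ P w g) (w : ℕ → G) {j k : ℕ} (hjk : j ≤ k) :
    ACoef P (word w j) ≤ ACoef P (word w k) :=
  Finset.sum_le_sum fun g _ => aCoef_word_mono hP w g hjk

variable [LinearOrder G]

lemma betaCoef_le_alphaCoef_of_lt (hP : ∀ w g, 0 ≤ P w g) (w : ℕ → G) (k : ℕ) {g g' : G}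
    (hg : g < g') : betaCoef P k g w ≤ alphaCoef P k g' w := by
  unfold alphaCoef betaCoef
  refine add_le_add_right (Finset.sum_le_sum_of_subset_of_nonneg ?_
    fun h _ _ => aCoef_word_sub_prev_nonneg hP w k h) _
  exact fun h hh => by simpa using (Finset.mem_filter.1 hh).2.trans_lt hg

lemma betaCoef_le_ACoef (hP : ∀ w g, 0 ≤ P w g) (w : ℕ → G) (k : ℕ) (g : G) :
    betaCoef P k g w ≤ ACoef P (word w k) := by
  have hsum : ∑ h, (aCoef P h (word w k) - if k = 0 then 0 else aCoef P h (word w (k - 1)))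
      = ACoef P (word w k) - if k = 0 then 0 else ACoef P (word w (k - 1)) := by
    rw [Finset.sum_sub_distrib]
    split_ifs <;> simp [ACoef]
  have hle := Finset.sum_le_sum_of_subset_of_nonneg (Finset.filter_subset (· ≤ g) univ)
    fun h _ _ => aCoef_word_sub_prev_nonneg hP w k h
  unfold betaCoef
  linarith

lemma ACoef_prev_le_alphaCoef (hP : ∀ w g, 0 ≤ P w g) (w : ℕ → G) {k : ℕ} (hk : k ≠ 0)
    (g : G) : ACoef P (word w (k - 1)) ≤ alphaCoef P k g w := by
  unfold alphaCoef
  rw [if_neg hk]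
  exact le_add_of_nonneg_right (Finset.sum_nonneg fun h _ => aCoef_word_sub_prev_nonneg hP w k h)

lemma betaCoef_le_alphaCoef_of_lt_level (hP : ∀ w g, 0 ≤ P w g) (w : ℕ → G) {k k' : ℕ}
    (hk : k < k') (g g' : G) : betaCoef P k g w ≤ alphaCoef P k' g' w :=
  calc betaCoef P k g w ≤ ACoef P (word w k) := betaCoef_le_ACoef hP w k g
    _ ≤ ACoef P (word w (k' - 1)) := ACoef_word_mono hP w (Nat.le_sub_one_of_lt hk)
    _ ≤ alphaCoef P k' g' w := ACoef_prev_le_alphaCoef hP w (by omega) g'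

lemma eq_of_mem_Ico_alphaCoef_betaCoef (hP : ∀ w g, 0 ≤ P w g) {w : ℕ → G} {u : ℝ}
    {k k' : ℕ} {g g' : G} (h : u ∈ Set.Ico (alphaCoef P k g w) (betaCoef P k g w))
    (h' : u ∈ Set.Ico (alphaCoef P k' g' w) (betaCoef P k' g' w)) : g = g' := by
  obtain ⟨h₁, h₂⟩ := h
  obtain ⟨h₁', h₂'⟩ := h'
  rcases lt_trichotomy k k' with hk | rfl | hk
  · linarith [betaCoef_le_alphaCoef_of_lt_level hP w hk g g']
  · rcases lt_trichotomy g g' with hg | rfl | hg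
    · linarith [betaCoef_le_alphaCoef_of_lt hP w k hg]
    · rfl
    · linarith [betaCoef_le_alphaCoef_of_lt hP w k hg]
  · linarith [betaCoef_le_alphaCoef_of_lt_level hP w hk g' g]

lemma alphaCoef_congr {z w : ℕ → G} {k : ℕ} (h : ∀ i < k, z i = w i) (g : G) :
    alphaCoef P k g z = alphaCoef P k g w := by
  simp only [alphaCoef, word_eq_of_agree le_rfl h, word_eq_of_agree (Nat.sub_le k 1) h]

lemma betaCoef_congr {z w : ℕ → G} {k : ℕ} (h : ∀ i < k, z i = w i) (g : G) :
    betaCoef P k g z = betaCoef P k g w := by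
  simp only [betaCoef, word_eq_of_agree le_rfl h, word_eq_of_agree (Nat.sub_le k 1) h]

end Coef

theorem stmt_6_general [Fintype G] [LinearOrder G] (P : (ℕ → G) → G → ℝ)
    (hP : IsKernel P)
    (φ : ℝ → (ℕ → G) → G) (hφ : IsUpdateRule P φ) :
    ∀ u ∈ Set.Ico (0 : ℝ) 1, ∀ w : ℕ → G, ∃ k : ℕ,
      ∀ z : ℕ → G, (∀ i < k, z i = w i) → φ u z = φ u w := by
  intro u hu w
  obtain ⟨k, hα, hβ⟩ := hφ u hu w
  refine ⟨k, fun z hz => ?_⟩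
  obtain ⟨k', hα', hβ'⟩ := hφ u hu z
  have hw : u ∈ Set.Ico (alphaCoef P k (φ u w) z) (betaCoef P k (φ u w) z) := by
    rw [alphaCoef_congr hz, betaCoef_congr hz]
    exact ⟨hα, hβ⟩
  exact eq_of_mem_Ico_alphaCoef_betaCoef (fun w g => (hP w).1 g) ⟨hα', hβ'⟩ hw

/-- Lemma 1 (phiPC): for every `u ∈ [0,1)`, the map `w ↦ φ_P(u, w)` is continuous from
`G^{-ℕ+}` to the discrete space `G`, i.e. locally constant: for every history `w` there is
`k` such that `φ_P(u, z) = φ_P(u, w)` whenever the last `k` symbols of `z` and `w` agree. -/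
theorem stmt_6 [Fintype G] [Nonempty G] [LinearOrder G] (P : (ℕ → G) → G → ℝ)
    (hP : IsKernel P) (hc : KernelContinuous P)
    (φ : ℝ → (ℕ → G) → G) (hφ : IsUpdateRule P φ) :
    ∀ u ∈ Set.Ico (0 : ℝ) 1, ∀ w : ℕ → G, ∃ k : ℕ,
      ∀ z : ℕ → G, (∀ i < k, z i = w i) → φ u z = φ u w :=
  stmt_6_general P hP φ hφ
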